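/- arXiv:2509.06455 — 8 statements merged into one kernel-verified Lean document; each statement's English description precedes it below -/
import Mathlib

section
/- Let n ≥ 2 be a natural number, let k = ⌊log₂ n⌋ and m = n − 2^k, and let p_s, p_is, p_d, p_id be real numbers in (0, 1]. Then p_s · p_is^(n−1) · (∏_{t=1}^{k} p_d^(2^(t−1)) · p_id^(n−2^t)) · p_d^m · p_id^((n−2m)·(⌈log₂ n⌉−k)) = p_s · p_is^(n−1) · p_d^(n−1) · p_id^(n·(⌈log₂ n⌉−2)+2), where every exponent appearing is a nonnegative integer. -/
lemma aux_geom (k : ℕ) : ∑ t ∈ Finset.Icc 1 k, 2 ^ (t - 1) = 2 ^ k - 1 := by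
  induction k with
  | zero => simp
  | succ k ih =>
    rw [Finset.sum_Icc_succ_top (by omega), ih]
    have : 1 ≤ 2 ^ k := Nat.one_le_two_pow
    simp [pow_succ]; omega

lemma aux_geom2 (k : ℕ) : ∑ t ∈ Finset.Icc 1 k, (2 : ℤ) ^ t = 2 ^ (k + 1) - 2 := by
  induction k with
  | zero => simp
  | succ k ih =>
    rw [Finset.sum_Icc_succ_top (by omega), ih]
    ring

/-- Success probability of the non-adaptive all-to-all GHZ preparation circuit:
for `n ≥ 2`, `k = ⌊log₂ n⌋`, `m = n - 2^k`, and `p_s, p_is, p_d, p_id ∈ (0,1]`,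
`p_s · p_is^(n-1) · (∏_{t=1}^k p_d^(2^(t-1)) p_id^(n-2^t)) · p_d^m ·
 p_id^((n-2m)(⌈log₂ n⌉-k)) = p_s · p_is^(n-1) · p_d^(n-1) · p_id^(n(⌈log₂ n⌉-2)+2)`. -/
theorem stmt1 (n : ℕ) (hn : 2 ≤ n) (ps pis pd pid : ℝ)
    (hps : ps ∈ Set.Ioc (0 : ℝ) 1) (hpis : pis ∈ Set.Ioc (0 : ℝ) 1)
    (hpd : pd ∈ Set.Ioc (0 : ℝ) 1) (hpid : pid ∈ Set.Ioc (0 : ℝ) 1) :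
    ps * pis ^ (n - 1) *
      (∏ t ∈ Finset.Icc 1 (Nat.log 2 n), pd ^ (2 ^ (t - 1)) * pid ^ (n - 2 ^ t)) *
      pd ^ (n - 2 ^ Nat.log 2 n) *
      pid ^ (((n : ℤ) - 2 * ((n : ℤ) - 2 ^ Nat.log 2 n)) *
        ((Nat.clog 2 n : ℤ) - (Nat.log 2 n : ℤ))) =
    ps * pis ^ (n - 1) * pd ^ (n - 1) *
      pid ^ ((n : ℤ) * ((Nat.clog 2 n : ℤ) - 2) + 2) := by
  have hpd0 : pd ≠ 0 := ne_of_gt hpd.1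
  have hpid0 : pid ≠ 0 := ne_of_gt hpid.1
  set k := Nat.log 2 n with hk
  have hkn : 2 ^ k ≤ n := Nat.pow_log_le_self 2 (by omega)
  have hlt : n < 2 ^ (k + 1) := Nat.lt_pow_succ_log_self (by norm_num) n
  have hkle : ∀ t ∈ Finset.Icc 1 k, 2 ^ t ≤ n := by
    intro t ht
    exact le_trans (Nat.pow_le_pow_right (by norm_num) (Finset.mem_Icc.mp ht).2) hkn
  -- split the product
  rw [Finset.prod_mul_distrib, Finset.prod_pow_eq_pow_sum, Finset.prod_pow_eq_pow_sum,
    aux_geom]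
  -- sum S2 cast to ℤ
  have hS2 : ((∑ t ∈ Finset.Icc 1 k, (n - 2 ^ t) : ℕ) : ℤ)
      = k * n - 2 ^ (k + 1) + 2 := by
    push_cast [Nat.cast_sum]
    rw [Finset.sum_congr rfl (fun t ht => Nat.cast_sub (hkle t ht))]
    rw [Finset.sum_sub_distrib]
    push_cast
    rw [aux_geom2]
    simp [Nat.card_Icc]
    ring
  -- determine clog
  have hclog : (2 ^ k = n ∧ Nat.clog 2 n = k) ∨ (2 ^ k < n ∧ Nat.clog 2 n = k + 1) := by
    rcases eq_or_lt_of_le hkn with h | h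
    · left; exact ⟨h, by rw [← h, Nat.clog_pow 2 k (by norm_num)]⟩
    · right
      refine ⟨h, le_antisymm ?_ ?_⟩
      · exact (Nat.clog_le_iff_le_pow (by norm_num)).mpr (le_of_lt hlt)
      · exact (Nat.lt_clog_iff_pow_lt (by norm_num)).mpr h
  -- combine pd powers
  have hpd_comb : pd ^ (2 ^ k - 1) * pd ^ (n - 2 ^ k) = pd ^ (n - 1) := by
    rw [← pow_add]
    congr 1
    have : 1 ≤ 2 ^ k := Nat.one_le_two_pow
    omega
  -- combine pid powers
  have hpid_comb : pid ^ (∑ t ∈ Finset.Icc 1 k, (n - 2 ^ t)) *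
      pid ^ (((n : ℤ) - 2 * ((n : ℤ) - 2 ^ k)) * ((Nat.clog 2 n : ℤ) - (k : ℤ)))
      = pid ^ ((n : ℤ) * ((Nat.clog 2 n : ℤ) - 2) + 2) := by
    rw [← zpow_natCast pid, ← zpow_add₀ hpid0]
    congr 1
    rw [hS2]
    rcases hclog with ⟨h1, h2⟩ | ⟨h1, h2⟩
    · rw [h2]
      have : ((2:ℤ)) ^ k = n := by exact_mod_cast h1
      push_cast
      rw [pow_succ] at *
      linarith [this]
    · rw [h2]
      push_cast
      ring
  calc ps * pis ^ (n - 1) * (pd ^ (2 ^ k - 1) * pid ^ (∑ t ∈ Finset.Icc 1 k, (n - 2 ^ t))) *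
        pd ^ (n - 2 ^ k) *
        pid ^ (((n : ℤ) - 2 * ((n : ℤ) - 2 ^ k)) * ((Nat.clog 2 n : ℤ) - (k : ℤ)))
      = ps * pis ^ (n - 1) * (pd ^ (2 ^ k - 1) * pd ^ (n - 2 ^ k)) *
        (pid ^ (∑ t ∈ Finset.Icc 1 k, (n - 2 ^ t)) *
          pid ^ (((n : ℤ) - 2 * ((n : ℤ) - 2 ^ k)) * ((Nat.clog 2 n : ℤ) - (k : ℤ)))) := by
        ring
    _ = ps * pis ^ (n - 1) * pd ^ (n - 1) *
        pid ^ ((n : ℤ) * ((Nat.clog 2 n : ℤ) - 2) + 2) := by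
        rw [hpd_comb, hpid_comb]
end

section
/- Let n ≥ 2 be a natural number and let p_s, p_is, p_d, p_id, p_m, p_im, p_ic be real numbers in (0, 1]. Then P_adapt(n) ≥ P_all(n) if and only if p_s^(n+⌊n/2⌋−1) · p_is^(⌈n/2⌉) · p_d^(n−1) · p_m^(n−1) · p_im^n · p_ic^n ≥ p_id^(n·(⌈log₂ n⌉−2)), where the last exponent is taken as an integer power (it may be negative for n = 2). -/
/-- The adaptive GHZ preparation protocol outperforms the non-adaptive all-to-all
protocol, `P_adapt(n) ≥ P_all(n)`, if and only if
`p_s^(n+⌊n/2⌋-1) p_is^⌈n/2⌉ p_d^(n-1) p_m^(n-1) p_im^n p_ic^n ≥ p_id^(n(⌈log₂ n⌉-2))`. -/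
theorem stmt5 (n : ℕ) (hn : 2 ≤ n) (ps pis pd pid pm pim pic : ℝ)
    (hps : ps ∈ Set.Ioc (0 : ℝ) 1) (hpis : pis ∈ Set.Ioc (0 : ℝ) 1)
    (hpd : pd ∈ Set.Ioc (0 : ℝ) 1) (hpid : pid ∈ Set.Ioc (0 : ℝ) 1)
    (hpm : pm ∈ Set.Ioc (0 : ℝ) 1) (hpim : pim ∈ Set.Ioc (0 : ℝ) 1)
    (hpic : pic ∈ Set.Ioc (0 : ℝ) 1) :
    (ps ^ (n + n / 2) * pis ^ (n + (n + 1) / 2 - 1) * pd ^ (2 * (n - 1)) * pid ^ 2 *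
        pm ^ (n - 1) * pim ^ n * pic ^ n ≥
      ps * pis ^ (n - 1) * pd ^ (n - 1) *
        pid ^ ((n : ℤ) * ((Nat.clog 2 n : ℤ) - 2) + 2)) ↔
    (ps ^ (n + n / 2 - 1) * pis ^ ((n + 1) / 2) * pd ^ (n - 1) *
        pm ^ (n - 1) * pim ^ n * pic ^ n ≥
      pid ^ ((n : ℤ) * ((Nat.clog 2 n : ℤ) - 2))) := by
  have hps0 := hps.1
  have hpis0 := hpis.1
  have hpd0 := hpd.1
  have hpid0 := hpid.1
  have hpidne : pid ≠ 0 := ne_of_gt hpid0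
  set z : ℤ := (n : ℤ) * ((Nat.clog 2 n : ℤ) - 2) with hz
  have e1 : ps ^ (n + n / 2) = ps ^ (n + n / 2 - 1) * ps := by
    rw [← pow_succ]; congr 1; omega
  have e2 : pis ^ (n + (n + 1) / 2 - 1) = pis ^ (n - 1) * pis ^ ((n + 1) / 2) := by
    rw [← pow_add]; congr 1; omega
  have e3 : pd ^ (2 * (n - 1)) = pd ^ (n - 1) * pd ^ (n - 1) := by
    rw [← pow_add]; congr 1; omega
  have e4 : pid ^ (z + 2) = pid ^ z * pid ^ (2 : ℕ) := by
    rw [zpow_add₀ hpidne, zpow_two, pow_two]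
  have hc : (0:ℝ) < ps * pis ^ (n - 1) * pd ^ (n - 1) * pid ^ (2 : ℕ) := by positivity
  rw [ge_iff_le, ge_iff_le, e1, e2, e3, e4,
    show ps * pis ^ (n - 1) * pd ^ (n - 1) * (pid ^ z * pid ^ (2 : ℕ)) =
      (ps * pis ^ (n - 1) * pd ^ (n - 1) * pid ^ (2 : ℕ)) * pid ^ z from by ring,
    show ps ^ (n + n / 2 - 1) * ps * (pis ^ (n - 1) * pis ^ ((n + 1) / 2)) *
        (pd ^ (n - 1) * pd ^ (n - 1)) * pid ^ 2 * pm ^ (n - 1) * pim ^ n * pic ^ n =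
      (ps * pis ^ (n - 1) * pd ^ (n - 1) * pid ^ (2 : ℕ)) *
        (ps ^ (n + n / 2 - 1) * pis ^ ((n + 1) / 2) * pd ^ (n - 1) *
          pm ^ (n - 1) * pim ^ n * pic ^ n) from by ring,
    mul_le_mul_iff_right₀ hc]
end

section
/- (Theorem 1, first part.) Let n ≥ 2 be a natural number, let ε > 0 be a real number, and let p_s, p_is, p_d, p_id, p_m, p_im, p_ic be real numbers in (0, 1] satisfying p_s = 1, p_is = 1, p_m = p_d, p_im = p_id, and p_ic = p_id. If p_d ≥ (1+ε) · p_id^((n·(⌈log₂ n⌉ − 4)) / (2(n−1))), where the exponent is a real number and the power is a real power, then P_adapt(n) ≥ (1+ε)^(2(n−1)) · P_all(n). -/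
/-- Theorem 1, first part: under the first-order assumptions, if
`p_d ≥ (1+ε) · p_id^(n(⌈log₂ n⌉-4)/(2(n-1)))` (real power), then
`P_adapt(n) ≥ (1+ε)^(2(n-1)) · P_all(n)`. -/
theorem stmt8 (n : ℕ) (hn : 2 ≤ n) (ε : ℝ) (hε : 0 < ε) (ps pis pd pid pm pim pic : ℝ)
    (hps : ps ∈ Set.Ioc (0 : ℝ) 1) (hpis : pis ∈ Set.Ioc (0 : ℝ) 1)
    (hpd : pd ∈ Set.Ioc (0 : ℝ) 1) (hpid : pid ∈ Set.Ioc (0 : ℝ) 1)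
    (hpm : pm ∈ Set.Ioc (0 : ℝ) 1) (hpim : pim ∈ Set.Ioc (0 : ℝ) 1)
    (hpic : pic ∈ Set.Ioc (0 : ℝ) 1)
    (hs : ps = 1) (his : pis = 1) (hm : pm = pd) (him : pim = pid) (hic : pic = pid)
    (hcond : pd ≥ (1 + ε) *
      pid ^ (((n : ℝ) * ((Nat.clog 2 n : ℝ) - 4)) / (2 * ((n : ℝ) - 1)))) :
    ps ^ (n + n / 2) * pis ^ (n + (n + 1) / 2 - 1) * pd ^ (2 * (n - 1)) * pid ^ 2 *
        pm ^ (n - 1) * pim ^ n * pic ^ n ≥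
      (1 + ε) ^ (2 * (n - 1)) *
        (ps * pis ^ (n - 1) * pd ^ (n - 1) *
          pid ^ ((n : ℤ) * ((Nat.clog 2 n : ℤ) - 2) + 2)) := by
  obtain ⟨hpd0, hpd1⟩ := hpd
  obtain ⟨hpid0, hpid1⟩ := hpid
  subst hs his
  rw [hm, him, hic]
  have hn1 : (1:ℕ) ≤ n := by omega
  have hnR : (2:ℝ) ≤ (n:ℝ) := by exact_mod_cast hn
  have hε1 : (0:ℝ) < 1 + ε := by linarith
  set E : ℝ := (n : ℝ) * ((Nat.clog 2 n : ℝ) - 4) with hE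
  have hk : (0:ℝ) < 2 * ((n:ℝ) - 1) := by linarith
  have hcastk : ((2 * (n - 1) : ℕ) : ℝ) = 2 * ((n:ℝ) - 1) := by
    push_cast [hn1]; ring
  -- raise the hypothesis to the power 2(n-1)
  have h1 : ((1+ε) * pid ^ (E / (2 * ((n:ℝ) - 1)))) ^ (2*(n-1)) ≤ pd ^ (2*(n-1)) :=
    pow_le_pow_left₀ (by positivity) hcond _
  have h2 : ((1+ε) * pid ^ (E / (2 * ((n:ℝ) - 1)))) ^ (2*(n-1))
      = (1+ε) ^ (2*(n-1)) * pid ^ E := by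
    rw [mul_pow, ← Real.rpow_natCast (pid ^ (E / (2 * ((n:ℝ) - 1)))) (2*(n-1)),
      ← Real.rpow_mul hpid0.le, hcastk, div_mul_cancel₀ _ (ne_of_gt hk)]
  have key : (1+ε) ^ (2*(n-1)) * pid ^ E ≤ pd ^ (2*(n-1)) := h2 ▸ h1
  -- rewrite the integer power of pid
  set B : ℝ := pid ^ (2 * (n:ℝ) + 2) with hB
  have hBpos : 0 < B := Real.rpow_pos_of_pos hpid0 _
  have hze : pid ^ ((n : ℤ) * ((Nat.clog 2 n : ℤ) - 2) + 2) = pid ^ E * B := by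
    rw [hB, hE, ← Real.rpow_intCast pid, ← Real.rpow_add hpid0]
    congr 1
    push_cast
    ring
  have hBnat : pid ^ 2 * pid ^ n * pid ^ n = B := by
    rw [hB]
    have : (2 * (n:ℝ) + 2) = ((2 + n + n : ℕ) : ℝ) := by push_cast; ring
    rw [this, Real.rpow_natCast]
    ring
  have step : pd ^ (2*(n-1)) * B ≥ ((1+ε) ^ (2*(n-1)) * pid ^ E) * B :=
    mul_le_mul_of_nonneg_right key hBpos.le
  calc (1:ℝ) ^ (n + n / 2) * 1 ^ (n + (n + 1) / 2 - 1) * pd ^ (2 * (n - 1)) * pid ^ 2 *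
        pd ^ (n - 1) * pid ^ n * pid ^ n
      = pd ^ (n-1) * (pd ^ (2*(n-1)) * B) := by rw [← hBnat]; ring
    _ ≥ pd ^ (n-1) * (((1+ε) ^ (2*(n-1)) * pid ^ E) * B) :=
        mul_le_mul_of_nonneg_left step (pow_nonneg hpd0.le _)
    _ = (1 + ε) ^ (2 * (n - 1)) * (1 * 1 ^ (n - 1) * pd ^ (n - 1) * (pid ^ E * B)) := by ring
    _ = _ := by rw [← hze]
end

section
/- (Theorem 1, second part.) Let n ≥ 2 be a natural number, let ε > 0 be a real number, and let p_s, p_is, p_d, p_id, p_m, p_im, p_ic be real numbers in (0, 1] satisfying p_s = 1, p_is = 1, p_m = p_d, p_im = p_id, and p_ic = p_id. If p_d ≥ (1+ε) · p_id^((n·(⌈n/2⌉ − 4)) / (2(n−1))), where the exponent is a real number and the power is a real power, then P_adapt(n) ≥ (1+ε)^(2(n−1)) · P_lin(n). -/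
/-- Theorem 1, second part: under the first-order assumptions, if
`p_d ≥ (1+ε) · p_id^(n(⌈n/2⌉-4)/(2(n-1)))` (real power), then
`P_adapt(n) ≥ (1+ε)^(2(n-1)) · P_lin(n)`. -/
theorem stmt9 (n : ℕ) (hn : 2 ≤ n) (ε : ℝ) (hε : 0 < ε) (ps pis pd pid pm pim pic : ℝ)
    (hps : ps ∈ Set.Ioc (0 : ℝ) 1) (hpis : pis ∈ Set.Ioc (0 : ℝ) 1)
    (hpd : pd ∈ Set.Ioc (0 : ℝ) 1) (hpid : pid ∈ Set.Ioc (0 : ℝ) 1)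
    (hpm : pm ∈ Set.Ioc (0 : ℝ) 1) (hpim : pim ∈ Set.Ioc (0 : ℝ) 1)
    (hpic : pic ∈ Set.Ioc (0 : ℝ) 1)
    (hs : ps = 1) (his : pis = 1) (hm : pm = pd) (him : pim = pid) (hic : pic = pid)
    (hcond : pd ≥ (1 + ε) *
      pid ^ (((n : ℝ) * (((((n + 1) / 2 : ℕ)) : ℝ) - 4)) / (2 * ((n : ℝ) - 1)))) :
    ps ^ (n + n / 2) * pis ^ (n + (n + 1) / 2 - 1) * pd ^ (2 * (n - 1)) * pid ^ 2 *
        pm ^ (n - 1) * pim ^ n * pic ^ n ≥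
      (1 + ε) ^ (2 * (n - 1)) *
        (ps * pis ^ (n - 1) * pd ^ (n - 1) *
          pid ^ ((n : ℤ) * ((((n + 1) / 2 : ℕ) : ℤ) - 2) + 2)) := by
  obtain ⟨hd0, hd1⟩ := hpd
  obtain ⟨hq0, hq1⟩ := hpid
  subst hs his
  rw [hm, him, hic]
  simp only [one_pow, one_mul]
  set c : ℕ := (n + 1) / 2 with hc
  set r : ℝ := ((n : ℝ) * ((c : ℝ) - 4)) / (2 * ((n : ℝ) - 1)) with hr
  have hn1 : (1 : ℝ) ≤ (n : ℝ) := by exact_mod_cast Nat.one_le_of_lt hn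
  have hden : (2 * ((n : ℝ) - 1)) ≠ 0 := by
    have : (1 : ℝ) < (n : ℝ) := by exact_mod_cast hn
    nlinarith
  have hε1 : (0 : ℝ) < 1 + ε := by linarith
  -- key: pd^(2(n-1)) ≥ (1+ε)^(2(n-1)) * pid^(n(c-4))
  have hcast : ((2 * (n - 1) : ℕ) : ℝ) = 2 * ((n : ℝ) - 1) := by
    push_cast [Nat.cast_sub (Nat.one_le_of_lt hn)]; ring
  have hK : (1 + ε) ^ (2 * (n - 1)) * pid ^ ((n : ℝ) * ((c : ℝ) - 4)) ≤
      pd ^ (2 * (n - 1)) := by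
    have h1 : ((1 + ε) * pid ^ r) ^ (2 * (n - 1)) ≤ pd ^ (2 * (n - 1)) :=
      pow_le_pow_left₀ (by positivity) hcond _
    rw [mul_pow] at h1
    have h2 : (pid ^ r) ^ (2 * (n - 1)) = pid ^ ((n : ℝ) * ((c : ℝ) - 4)) := by
      rw [← Real.rpow_natCast (pid ^ r) (2 * (n - 1)), ← Real.rpow_mul hq0.le]
      congr 1
      rw [hcast, hr, div_mul_cancel₀ _ hden]
    rwa [h2] at h1
  -- rewrite the zpow factor
  have hz : pid ^ ((n : ℤ) * ((c : ℤ) - 2) + 2) =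
      pid ^ ((n : ℝ) * ((c : ℝ) - 4)) * pid ^ (2 : ℕ) * pid ^ n * pid ^ n := by
    rw [← Real.rpow_natCast pid 2, ← Real.rpow_natCast pid n,
      ← Real.rpow_intCast pid ((n : ℤ) * ((c : ℤ) - 2) + 2),
      ← Real.rpow_add hq0, ← Real.rpow_add hq0, ← Real.rpow_add hq0]
    congr 1
    push_cast
    ring
  rw [hz]
  have hpos : (0 : ℝ) < pid ^ (2 : ℕ) * pid ^ n * pid ^ n * pd ^ (n - 1) := by positivity
  calc (1 + ε) ^ (2 * (n - 1)) *
      (pd ^ (n - 1) * (pid ^ ((n : ℝ) * ((c : ℝ) - 4)) * pid ^ (2 : ℕ) * pid ^ n * pid ^ n))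
      = ((1 + ε) ^ (2 * (n - 1)) * pid ^ ((n : ℝ) * ((c : ℝ) - 4))) *
          (pid ^ (2 : ℕ) * pid ^ n * pid ^ n * pd ^ (n - 1)) := by ring
    _ ≤ pd ^ (2 * (n - 1)) * (pid ^ (2 : ℕ) * pid ^ n * pid ^ n * pd ^ (n - 1)) :=
        mul_le_mul_of_nonneg_right hK hpos.le
    _ = pd ^ (2 * (n - 1)) * pid ^ 2 * pd ^ (n - 1) * pid ^ n * pid ^ n := by ring
end

section
/- Let k ≥ 2 and g ≥ 1 be natural numbers, let n = k·g, let ε > 0 be a real number, and let p_s, p_is, p_d, p_id, p_m, p_im, p_ic be real numbers in (0, 1] satisfying p_s = 1, p_is = 1, p_m = p_d, p_im = p_id, and p_ic = p_id. If p_d ≥ (1+ε) · p_id^((n·(⌈log₂ n⌉ − ⌈log₂ g⌉ − 4) − k·⌈log₂ g⌉) / (2(k−1))), where the exponent is a real number and the power is a real power, then P_hybAll(n,k,g) ≥ (1+ε)^(2(k−1)) · P_all(n). -/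
/-- Hybrid all-to-all GHZ preparation: under the first-order assumptions, if
`p_d ≥ (1+ε) · p_id^((n(⌈log₂ n⌉-⌈log₂ g⌉-4) - k⌈log₂ g⌉)/(2(k-1)))` (real power),
then `P_hybAll(n,k,g) ≥ (1+ε)^(2(k-1)) · P_all(n)`, where `n = k·g`. -/
theorem stmt10 (k g n : ℕ) (hk : 2 ≤ k) (hg : 1 ≤ g) (hn : n = k * g)
    (ε : ℝ) (hε : 0 < ε) (ps pis pd pid pm pim pic : ℝ)
    (hps : ps ∈ Set.Ioc (0 : ℝ) 1) (hpis : pis ∈ Set.Ioc (0 : ℝ) 1)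
    (hpd : pd ∈ Set.Ioc (0 : ℝ) 1) (hpid : pid ∈ Set.Ioc (0 : ℝ) 1)
    (hpm : pm ∈ Set.Ioc (0 : ℝ) 1) (hpim : pim ∈ Set.Ioc (0 : ℝ) 1)
    (hpic : pic ∈ Set.Ioc (0 : ℝ) 1)
    (hs : ps = 1) (his : pis = 1) (hm : pm = pd) (him : pim = pid) (hic : pic = pid)
    (hcond : pd ≥ (1 + ε) *
      pid ^ (((n : ℝ) * ((Nat.clog 2 n : ℝ) - (Nat.clog 2 g : ℝ) - 4) -
        (k : ℝ) * (Nat.clog 2 g : ℝ)) / (2 * ((k : ℝ) - 1)))) :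
    ps ^ (2 * k + n / 2) * pis ^ (3 * n - k + (n + 1) / 2 - 1) * pd ^ (n + k - 2) *
        pid ^ ((n + k) * Nat.clog 2 g + 2) * pm ^ (k - 1) * pim ^ n * pic ^ n ≥
      (1 + ε) ^ (2 * (k - 1)) *
        (ps * pis ^ (n - 1) * pd ^ (n - 1) *
          pid ^ ((n : ℤ) * ((Nat.clog 2 n : ℤ) - 2) + 2)) := by
  subst hs his
  rw [hm, him, hic]
  obtain ⟨hpd0, hpd1⟩ := hpd
  obtain ⟨hpid0, hpid1⟩ := hpid
  have hn2 : 2 ≤ n := by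
    subst hn
    calc 2 = 2 * 1 := by norm_num
    _ ≤ k * g := Nat.mul_le_mul hk hg
  set cg : ℕ := Nat.clog 2 g with hcg
  set cn : ℕ := Nat.clog 2 n with hcn
  set E : ℝ := (n : ℝ) * ((cn : ℝ) - (cg : ℝ) - 4) - (k : ℝ) * (cg : ℝ) with hE
  set c : ℝ := 2 * ((k : ℝ) - 1) with hc
  have hk1 : (2 : ℝ) ≤ (k : ℝ) := by exact_mod_cast hk
  have hc0 : 0 < c := by rw [hc]; linarith
  have hε1 : (0 : ℝ) ≤ 1 + ε := by linarith
  have key : (1 + ε) ^ c * pid ^ E ≤ pd ^ c := by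
    have h1 : ((1 + ε) * pid ^ (E / c)) ^ c ≤ pd ^ c :=
      Real.rpow_le_rpow (by positivity) hcond hc0.le
    rwa [Real.mul_rpow hε1 (Real.rpow_nonneg hpid0.le _),
      ← Real.rpow_mul hpid0.le, div_mul_cancel₀ _ hc0.ne'] at h1
  simp only [one_pow, one_mul]
  rw [ge_iff_le, ← Real.rpow_natCast pd (n + k - 2), ← Real.rpow_natCast pid ((n + k) * cg + 2),
    ← Real.rpow_natCast pd (k - 1), ← Real.rpow_natCast pid n,
    ← Real.rpow_natCast (1 + ε) (2 * (k - 1)), ← Real.rpow_natCast pd (n - 1),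
    ← Real.rpow_intCast pid ((n : ℤ) * ((cn : ℤ) - 2) + 2)]
  have e1 : ((n + k - 2 : ℕ) : ℝ) = ((n - 1 : ℕ) : ℝ) + ((k : ℝ) - 1) := by
    have h1 : 2 ≤ n + k := by omega
    rw [Nat.cast_sub h1, Nat.cast_sub (by omega : 1 ≤ n)]
    push_cast; ring
  have e2 : ((k - 1 : ℕ) : ℝ) = (k : ℝ) - 1 := by
    rw [Nat.cast_sub (by omega : 1 ≤ k)]; norm_num
  have e3 : ((2 * (k - 1) : ℕ) : ℝ) = c := by
    rw [hc, Nat.cast_mul, Nat.cast_sub (by omega : 1 ≤ k)]; push_cast; ring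
  have e4 : ((((n : ℤ) * ((cn : ℤ) - 2) + 2 : ℤ)) : ℝ)
      = (((n + k) * cg + 2 : ℕ) : ℝ) + (n : ℝ) + (n : ℝ) + E := by
    rw [hE]; push_cast; ring
  rw [e1, e2, e3, e4]
  rw [Real.rpow_add hpd0, Real.rpow_add hpid0, Real.rpow_add hpid0, Real.rpow_add hpid0]
  have hbase : (0 : ℝ) < pd ^ (((n - 1 : ℕ) : ℝ)) * pid ^ ((((n + k) * cg + 2 : ℕ)) : ℝ)
      * pid ^ (n : ℝ) * pid ^ (n : ℝ) := by positivity
  calc (1 + ε) ^ c * (pd ^ (((n - 1 : ℕ) : ℝ)) *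
        (pid ^ ((((n + k) * cg + 2 : ℕ)) : ℝ) * pid ^ (n : ℝ) * pid ^ (n : ℝ) * pid ^ E))
      = (pd ^ (((n - 1 : ℕ) : ℝ)) * pid ^ ((((n + k) * cg + 2 : ℕ)) : ℝ)
          * pid ^ (n : ℝ) * pid ^ (n : ℝ)) * ((1 + ε) ^ c * pid ^ E) := by ring
    _ ≤ (pd ^ (((n - 1 : ℕ) : ℝ)) * pid ^ ((((n + k) * cg + 2 : ℕ)) : ℝ)
          * pid ^ (n : ℝ) * pid ^ (n : ℝ)) * pd ^ c :=
        mul_le_mul_of_nonneg_left key hbase.le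
    _ = pd ^ (((n - 1 : ℕ) : ℝ)) * pd ^ ((k : ℝ) - 1)
          * pid ^ ((((n + k) * cg + 2 : ℕ)) : ℝ) * pd ^ ((k : ℝ) - 1)
          * pid ^ (n : ℝ) * pid ^ (n : ℝ) := by
        rw [hc, show (2 : ℝ) * ((k : ℝ) - 1) = ((k : ℝ) - 1) + ((k : ℝ) - 1) by ring,
          Real.rpow_add hpd0]
        ring
end

section
/- Let k ≥ 2 and g ≥ 1 be natural numbers, let n = k·g, let ε > 0 be a real number, and let p_s, p_is, p_d, p_id, p_m, p_im, p_ic be real numbers in (0, 1] satisfying p_s = 1, p_is = 1, p_m = p_d, p_im = p_id, and p_ic = p_id. If p_d ≥ (1+ε) · p_id^((n·(⌈n/2⌉ − ⌈g/2⌉ − 4) − k·⌈g/2⌉) / (2(k−1))), where the exponent is a real number and the power is a real power, then P_hybLin(n,k,g) ≥ (1+ε)^(2(k−1)) · P_lin(n). -/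
/-- Hybrid linear nearest-neighbor GHZ preparation: under the first-order
assumptions, if `p_d ≥ (1+ε) · p_id^((n(⌈n/2⌉-⌈g/2⌉-4) - k⌈g/2⌉)/(2(k-1)))`
(real power), then `P_hybLin(n,k,g) ≥ (1+ε)^(2(k-1)) · P_lin(n)`, where `n = k·g`. -/
theorem stmt11 (k g n : ℕ) (hk : 2 ≤ k) (hg : 1 ≤ g) (hn : n = k * g)
    (ε : ℝ) (hε : 0 < ε) (ps pis pd pid pm pim pic : ℝ)
    (hps : ps ∈ Set.Ioc (0 : ℝ) 1) (hpis : pis ∈ Set.Ioc (0 : ℝ) 1)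
    (hpd : pd ∈ Set.Ioc (0 : ℝ) 1) (hpid : pid ∈ Set.Ioc (0 : ℝ) 1)
    (hpm : pm ∈ Set.Ioc (0 : ℝ) 1) (hpim : pim ∈ Set.Ioc (0 : ℝ) 1)
    (hpic : pic ∈ Set.Ioc (0 : ℝ) 1)
    (hs : ps = 1) (his : pis = 1) (hm : pm = pd) (him : pim = pid) (hic : pic = pid)
    (hcond : pd ≥ (1 + ε) *
      pid ^ (((n : ℝ) * ((((n + 1) / 2 : ℕ) : ℝ) - (((g + 1) / 2 : ℕ) : ℝ) - 4) -
        (k : ℝ) * (((g + 1) / 2 : ℕ) : ℝ)) / (2 * ((k : ℝ) - 1)))) :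
    ps ^ (2 * k + n / 2) * pis ^ (3 * n - k + (n + 1) / 2 - 1) * pd ^ (n + k - 2) *
        pid ^ ((n + k) * ((g + 1) / 2) + 2) * pm ^ (k - 1) * pim ^ n * pic ^ n ≥
      (1 + ε) ^ (2 * (k - 1)) *
        (ps * pis ^ (n - 1) * pd ^ (n - 1) *
          pid ^ ((n : ℤ) * ((((n + 1) / 2 : ℕ) : ℤ) - 2) + 2)) := by
  obtain ⟨hpd0, hpd1⟩ := hpd
  obtain ⟨hpid0, hpid1⟩ := hpid
  rw [hs, his, hm, him, hic]
  simp only [one_pow, one_mul, mul_one]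
  have hk1 : 1 ≤ k := by omega
  have hn2 : 2 ≤ n := by
    have := Nat.mul_le_mul hk hg; omega
  set G : ℕ := (g + 1) / 2 with hG
  set C : ℕ := (n + 1) / 2 with hC
  set m : ℕ := 2 * (k - 1) with hm'
  have hmR : (m : ℝ) = 2 * ((k : ℝ) - 1) := by
    rw [hm']
    push_cast [Nat.cast_sub hk1]
    ring
  set E : ℝ := (n : ℝ) * ((C : ℝ) - (G : ℝ) - 4) - (k : ℝ) * (G : ℝ) with hE
  have h1ε : (0:ℝ) < 1 + ε := by linarith
  have hbase : 0 ≤ (1 + ε) * pid ^ (E / (2 * ((k:ℝ) - 1))) := by positivity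
  have key0 : ((1 + ε) * pid ^ (E / (2 * ((k:ℝ) - 1)))) ^ m ≤ pd ^ m :=
    pow_le_pow_left₀ hbase hcond m
  have hkR : (2:ℝ) ≤ (k:ℝ) := by exact_mod_cast hk
  have hD : 2 * ((k:ℝ) - 1) ≠ 0 := by nlinarith
  have hDm : E / (2 * ((k:ℝ) - 1)) * (m : ℝ) = E := by
    rw [hmR]; field_simp
    exact mul_div_cancel_right₀ E (ne_of_gt (by linarith))
  have key : (1 + ε) ^ m * pid ^ E ≤ pd ^ m := by
    calc (1 + ε) ^ m * pid ^ E
        = (1 + ε) ^ m * (pid ^ (E / (2 * ((k:ℝ) - 1)))) ^ m := by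
          rw [← Real.rpow_natCast (pid ^ (E / (2 * ((k:ℝ) - 1)))) m,
            ← Real.rpow_mul hpid0.le, hDm]
      _ = ((1 + ε) * pid ^ (E / (2 * ((k:ℝ) - 1)))) ^ m := by rw [mul_pow]
      _ ≤ pd ^ m := key0
  set A : ℕ := (n + k) * G + 2 + n + n with hA
  have hsum : pid ^ E * pid ^ (A : ℕ) = pid ^ ((n:ℤ) * ((C:ℤ) - 2) + 2) := by
    rw [← Real.rpow_natCast pid A, ← Real.rpow_add hpid0, ← Real.rpow_intCast]
    congr 1
    rw [hE, hA]
    push_cast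
    ring
  have inner : (1 + ε) ^ m * pid ^ ((n:ℤ) * ((C:ℤ) - 2) + 2) ≤ pd ^ m * pid ^ A := by
    rw [← hsum, ← mul_assoc]
    exact mul_le_mul_of_nonneg_right key (by positivity)
  have lhseq : pd ^ (n + k - 2) * pid ^ ((n + k) * G + 2) * pd ^ (k - 1) *
      pid ^ n * pid ^ n = pd ^ (n - 1) * (pd ^ m * pid ^ A) := by
    rw [hA, hm']
    rw [show n + k - 2 = (n - 1) + (k - 1) by omega]
    rw [show 2 * (k - 1) = (k - 1) + (k - 1) by omega]
    rw [show (n + k) * G + 2 + n + n = ((n + k) * G + 2) + n + n by omega]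
    rw [pow_add, pow_add, pow_add, pow_add]
    ring
  rw [ge_iff_le, lhseq]
  calc (1 + ε) ^ m * (pd ^ (n - 1) * pid ^ ((n:ℤ) * ((C:ℤ) - 2) + 2))
      = pd ^ (n - 1) * ((1 + ε) ^ m * pid ^ ((n:ℤ) * ((C:ℤ) - 2) + 2)) := by ring
    _ ≤ pd ^ (n - 1) * (pd ^ m * pid ^ A) :=
        mul_le_mul_of_nonneg_left inner (by positivity)
end

section
/- Let n ≥ 1 and t ≥ 1 be natural numbers and let p_s, p_is, p_d, p_id, p_m, p_im, p_ic be real numbers in (0, 1]. Then F_Fanout(t)^(2n) · F_Fanout(n)^(2t) · (p_s^3 · p_is^3 · p_d^2)^(n·t) ≥ p_s^(11nt + 2(n·⌈(t−1)/2⌉ + t·⌈(n−1)/2⌉) + 2t) · p_is^(23nt + 2n·⌊(t−1)/2⌋ + 2t·⌊(n−1)/2⌋ − 4(n+t)) · p_d^(14nt − 4(n+t)) · p_id^(8nt + 2(n+t)) · p_m^(8nt − 2(n+t)) · p_im^(12nt − 2(n+t)) · p_ic^(12nt − 2(n+t)). In fact the left-hand side equals the right-hand side divided by p_s^(2t), so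 the inequality follows since p_s ≤ 1. -/
/-- Success probability of the constant-depth adaptive fanout gate on `m` qubits:
`F_Fanout(m) = p_s^(2m+⌈(m-1)/2⌉) · p_is^(5m+⌊(m-1)/2⌋-2) · p_d^(3m-2) ·
 p_id^(2m+1) · p_m^(2m-1) · p_im^(3m-1) · p_ic^(3m-1)`. -/
def FFanout (ps pis pd pid pm pim pic : ℝ) (m : ℕ) : ℝ :=
  ps ^ (2 * m + (m - 1 + 1) / 2) * pis ^ (5 * m + (m - 1) / 2 - 2) *
    pd ^ (3 * m - 2) * pid ^ (2 * m + 1) * pm ^ (2 * m - 1) *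
    pim ^ (3 * m - 1) * pic ^ (3 * m - 1)

set_option maxHeartbeats 1000000 in
/-- OR-reduction success probability: `F_Fanout(t)^(2n) · F_Fanout(n)^(2t) ·
(p_s³ p_is³ p_d²)^(nt)` is at least the paper's OR-reduction formula; in fact it
equals that formula divided by `p_s^(2t)`. -/
theorem stmt17 (n t : ℕ) (hn : 1 ≤ n) (ht : 1 ≤ t) (ps pis pd pid pm pim pic : ℝ)
    (hps : ps ∈ Set.Ioc (0 : ℝ) 1) (hpis : pis ∈ Set.Ioc (0 : ℝ) 1)
    (hpd : pd ∈ Set.Ioc (0 : ℝ) 1) (hpid : pid ∈ Set.Ioc (0 : ℝ) 1)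
    (hpm : pm ∈ Set.Ioc (0 : ℝ) 1) (hpim : pim ∈ Set.Ioc (0 : ℝ) 1)
    (hpic : pic ∈ Set.Ioc (0 : ℝ) 1) :
    (FFanout ps pis pd pid pm pim pic t) ^ (2 * n) *
        (FFanout ps pis pd pid pm pim pic n) ^ (2 * t) *
        (ps ^ 3 * pis ^ 3 * pd ^ 2) ^ (n * t) ≥
      ps ^ (11 * n * t + 2 * (n * ((t - 1 + 1) / 2) + t * ((n - 1 + 1) / 2)) + 2 * t) *
        pis ^ (23 * n * t + 2 * n * ((t - 1) / 2) + 2 * t * ((n - 1) / 2) - 4 * (n + t)) *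
        pd ^ (14 * n * t - 4 * (n + t)) * pid ^ (8 * n * t + 2 * (n + t)) *
        pm ^ (8 * n * t - 2 * (n + t)) * pim ^ (12 * n * t - 2 * (n + t)) *
        pic ^ (12 * n * t - 2 * (n + t)) ∧
    (FFanout ps pis pd pid pm pim pic t) ^ (2 * n) *
        (FFanout ps pis pd pid pm pim pic n) ^ (2 * t) *
        (ps ^ 3 * pis ^ 3 * pd ^ 2) ^ (n * t) =
      (ps ^ (11 * n * t + 2 * (n * ((t - 1 + 1) / 2) + t * ((n - 1 + 1) / 2)) + 2 * t) *
        pis ^ (23 * n * t + 2 * n * ((t - 1) / 2) + 2 * t * ((n - 1) / 2) - 4 * (n + t)) *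
        pd ^ (14 * n * t - 4 * (n + t)) * pid ^ (8 * n * t + 2 * (n + t)) *
        pm ^ (8 * n * t - 2 * (n + t)) * pim ^ (12 * n * t - 2 * (n + t)) *
        pic ^ (12 * n * t - 2 * (n + t))) / ps ^ (2 * t) := by
  obtain ⟨hps0, hps1⟩ := hps
  obtain ⟨hpis0, _⟩ := hpis
  obtain ⟨hpd0, _⟩ := hpd
  obtain ⟨hpid0, _⟩ := hpid
  obtain ⟨hpm0, _⟩ := hpm
  obtain ⟨hpim0, _⟩ := hpim
  obtain ⟨hpic0, _⟩ := hpic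
  have hnt1 : n ≤ n * t := Nat.le_mul_of_pos_right n ht
  have hnt2 : t ≤ n * t := Nat.le_mul_of_pos_left t hn
  have hs : ∀ k : ℕ, 8 ≤ k → 4 * (n + t) ≤ k * n * t := by
    intro k hk
    calc 4 * (n + t) ≤ 4 * (n * t + n * t) :=
          Nat.mul_le_mul_left 4 (Nat.add_le_add hnt1 hnt2)
      _ = 8 * n * t := by ring
      _ ≤ k * n * t := Nat.mul_le_mul_right t (Nat.mul_le_mul_right n hk)
  set A := (t - 1 + 1) / 2 with hA
  set B := (t - 1) / 2 with hB
  set C := (n - 1 + 1) / 2 with hC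
  set D := (n - 1) / 2 with hD
  have e1 : (2 * t + A) * (2 * n) + (2 * n + C) * (2 * t) + 3 * (n * t) + 2 * t
      = 11 * n * t + 2 * (n * A + t * C) + 2 * t := by ring
  have e2 : (5 * t + B - 2) * (2 * n) + (5 * n + D - 2) * (2 * t) + 3 * (n * t)
      = 23 * n * t + 2 * n * B + 2 * t * D - 4 * (n + t) := by
    have h1 : 2 ≤ 5 * t + B := by omega
    have h2 : 2 ≤ 5 * n + D := by omega
    have h3 : 4 * (n + t) ≤ 23 * n * t + 2 * n * B + 2 * t * D :=
      le_trans (hs 23 (by norm_num)) (le_trans (Nat.le_add_right _ _) (Nat.le_add_right _ _))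
    zify [h1, h2, h3]
    ring
  have e3 : (3 * t - 2) * (2 * n) + (3 * n - 2) * (2 * t) + 2 * (n * t)
      = 14 * n * t - 4 * (n + t) := by
    have h1 : 2 ≤ 3 * t := by omega
    have h2 : 2 ≤ 3 * n := by omega
    have h3 : 4 * (n + t) ≤ 14 * n * t := hs 14 (by norm_num)
    zify [h1, h2, h3]
    ring
  have e4 : (2 * t + 1) * (2 * n) + (2 * n + 1) * (2 * t)
      = 8 * n * t + 2 * (n + t) := by ring
  have e5 : (2 * t - 1) * (2 * n) + (2 * n - 1) * (2 * t)
      = 8 * n * t - 2 * (n + t) := by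
    have h1 : 1 ≤ 2 * t := by omega
    have h2 : 1 ≤ 2 * n := by omega
    have h3 : 2 * (n + t) ≤ 8 * n * t := le_trans (by omega) (hs 8 le_rfl)
    zify [h1, h2, h3]
    ring
  have e6 : (3 * t - 1) * (2 * n) + (3 * n - 1) * (2 * t)
      = 12 * n * t - 2 * (n + t) := by
    have h1 : 1 ≤ 3 * t := by omega
    have h2 : 1 ≤ 3 * n := by omega
    have h3 : 2 * (n + t) ≤ 12 * n * t := le_trans (by omega) (hs 12 (by norm_num))
    zify [h1, h2, h3]
    ring
  have key : (FFanout ps pis pd pid pm pim pic t) ^ (2 * n) *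
        (FFanout ps pis pd pid pm pim pic n) ^ (2 * t) *
        (ps ^ 3 * pis ^ 3 * pd ^ 2) ^ (n * t) * ps ^ (2 * t) =
      ps ^ (11 * n * t + 2 * (n * A + t * C) + 2 * t) *
        pis ^ (23 * n * t + 2 * n * B + 2 * t * D - 4 * (n + t)) *
        pd ^ (14 * n * t - 4 * (n + t)) * pid ^ (8 * n * t + 2 * (n + t)) *
        pm ^ (8 * n * t - 2 * (n + t)) * pim ^ (12 * n * t - 2 * (n + t)) *
        pic ^ (12 * n * t - 2 * (n + t)) := by
    rw [← e1, ← e2, ← e3, ← e4, ← e5, ← e6]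
    unfold FFanout
    rw [← hA, ← hB, ← hC, ← hD]
    ring
  have hpsne : ps ^ (2 * t) ≠ 0 := pow_ne_zero _ (ne_of_gt hps0)
  have heq : (FFanout ps pis pd pid pm pim pic t) ^ (2 * n) *
        (FFanout ps pis pd pid pm pim pic n) ^ (2 * t) *
        (ps ^ 3 * pis ^ 3 * pd ^ 2) ^ (n * t) =
      (ps ^ (11 * n * t + 2 * (n * A + t * C) + 2 * t) *
        pis ^ (23 * n * t + 2 * n * B + 2 * t * D - 4 * (n + t)) *
        pd ^ (14 * n * t - 4 * (n + t)) * pid ^ (8 * n * t + 2 * (n + t)) *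
        pm ^ (8 * n * t - 2 * (n + t)) * pim ^ (12 * n * t - 2 * (n + t)) *
        pic ^ (12 * n * t - 2 * (n + t))) / ps ^ (2 * t) := by
    rw [eq_div_iff hpsne]
    exact key
  refine ⟨?_, heq⟩
  rw [heq]
  set R := ps ^ (11 * n * t + 2 * (n * A + t * C) + 2 * t) *
        pis ^ (23 * n * t + 2 * n * B + 2 * t * D - 4 * (n + t)) *
        pd ^ (14 * n * t - 4 * (n + t)) * pid ^ (8 * n * t + 2 * (n + t)) *
        pm ^ (8 * n * t - 2 * (n + t)) * pim ^ (12 * n * t - 2 * (n + t)) *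
        pic ^ (12 * n * t - 2 * (n + t)) with hR
  have hR0 : 0 ≤ R := by positivity
  have hple : ps ^ (2 * t) ≤ 1 := pow_le_one₀ (le_of_lt hps0) hps1
  rw [ge_iff_le, le_div_iff₀ (pow_pos hps0 _)]
  nlinarith [hR0, hple, pow_pos hps0 (2 * t)]
end

section
/- (Theorem 2.) Let k ≥ 1 be a natural number, n = 2^k, t = ⌈log₂(k+1)⌉, let ε > 0 be a real number, and let p_d, p_id be real numbers in (0, 1]. Set E₁ := 59nkt + 15nk − 28nt − 9n − 12k + 5 and E₂ := 3n² − 88nkt − 38nk + 22nt − 48n + 4k + 10 (integers). Define F_Wadapt := p_d^(59nkt + 15nk − 28nt − 6n − 12k) · p_id^(88nkt + 38nk − 22nt + 37n − 4k) and F_Wnon := p_d^(3n−5) · p_id^(3n² − 11n + 10). If E₁ > 0 and p_d^(E₁) ≥ (1+ε)^(E₁) · p_id^(E₂) (integer powers of p_d and p_id, real power of 1+ε), then F_Wadapt ≥ (1+ε)^(E₁) · F_Wnon. -/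
/-- Theorem 2: with `n = 2^k`, `t = ⌈log₂(k+1)⌉`,
`E₁ = 59nkt+15nk-28nt-9n-12k+5` and `E₂ = 3n²-88nkt-38nk+22nt-48n+4k+10`, if
`E₁ > 0` and `p_d^E₁ ≥ (1+ε)^E₁ · p_id^E₂`, then the adaptive W-state success
formula exceeds the non-adaptive one by the factor `(1+ε)^E₁`:
`F_Wadapt ≥ (1+ε)^E₁ · F_Wnon`. -/
theorem stmt19 (k n t : ℕ) (hk : 1 ≤ k) (hn : n = 2 ^ k) (ht : t = Nat.clog 2 (k + 1))
    (ε : ℝ) (hε : 0 < ε)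
    (pd pid : ℝ) (hpd : pd ∈ Set.Ioc (0 : ℝ) 1) (hpid : pid ∈ Set.Ioc (0 : ℝ) 1)
    (E₁ E₂ : ℤ)
    (hE₁ : E₁ = 59 * (n : ℤ) * (k : ℤ) * (t : ℤ) + 15 * (n : ℤ) * (k : ℤ) -
      28 * (n : ℤ) * (t : ℤ) - 9 * (n : ℤ) - 12 * (k : ℤ) + 5)
    (hE₂ : E₂ = 3 * (n : ℤ) ^ 2 - 88 * (n : ℤ) * (k : ℤ) * (t : ℤ) -
      38 * (n : ℤ) * (k : ℤ) + 22 * (n : ℤ) * (t : ℤ) - 48 * (n : ℤ) +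
      4 * (k : ℤ) + 10)
    (hE₁pos : 0 < E₁)
    (hcond : pd ^ E₁ ≥ (1 + ε) ^ (E₁ : ℝ) * pid ^ E₂) :
    pd ^ (59 * (n : ℤ) * (k : ℤ) * (t : ℤ) + 15 * (n : ℤ) * (k : ℤ) -
          28 * (n : ℤ) * (t : ℤ) - 6 * (n : ℤ) - 12 * (k : ℤ)) *
        pid ^ (88 * (n : ℤ) * (k : ℤ) * (t : ℤ) + 38 * (n : ℤ) * (k : ℤ) -
          22 * (n : ℤ) * (t : ℤ) + 37 * (n : ℤ) - 4 * (k : ℤ)) ≥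
      (1 + ε) ^ (E₁ : ℝ) *
        (pd ^ (3 * (n : ℤ) - 5) * pid ^ (3 * (n : ℤ) ^ 2 - 11 * (n : ℤ) + 10)) := by
  obtain ⟨hpd0, hpd1⟩ := hpd
  obtain ⟨hpid0, hpid1⟩ := hpid
  set N := (n : ℤ); set K := (k : ℤ); set T := (t : ℤ)
  have hA : 59 * N * K * T + 15 * N * K - 28 * N * T - 6 * N - 12 * K
      = (3 * N - 5) + E₁ := by rw [hE₁]; ring
  have hD : 3 * N ^ 2 - 11 * N + 10
      = (88 * N * K * T + 38 * N * K - 22 * N * T + 37 * N - 4 * K) + E₂ := by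
    rw [hE₂]; ring
  have hpos : (0:ℝ) < pd ^ (3 * N - 5) *
      pid ^ (88 * N * K * T + 38 * N * K - 22 * N * T + 37 * N - 4 * K) :=
    mul_pos (zpow_pos hpd0 _) (zpow_pos hpid0 _)
  have h := mul_le_mul_of_nonneg_left hcond hpos.le
  rw [hA, hD, zpow_add₀ hpd0.ne', zpow_add₀ hpid0.ne']
  calc (1 + ε) ^ (E₁ : ℝ) * (pd ^ (3 * N - 5) *
        (pid ^ (88 * N * K * T + 38 * N * K - 22 * N * T + 37 * N - 4 * K) * pid ^ E₂))
      = pd ^ (3 * N - 5) *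
        pid ^ (88 * N * K * T + 38 * N * K - 22 * N * T + 37 * N - 4 * K) *
        ((1 + ε) ^ (E₁ : ℝ) * pid ^ E₂) := by ring
    _ ≤ pd ^ (3 * N - 5) *
        pid ^ (88 * N * K * T + 38 * N * K - 22 * N * T + 37 * N - 4 * K) * pd ^ E₁ := h
    _ = pd ^ (3 * N - 5) * pd ^ E₁ *
        pid ^ (88 * N * K * T + 38 * N * K - 22 * N * T + 37 * N - 4 * K) := by ring
end
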